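/- The optimization problem $\max \{ \sum_{k=1}^m w_k x_k : \sum_{k=1}^m \overline{w}_k x_k = 1,\ x_1 \geq x_2 \geq \dots \geq x_m \geq 0 \}$, where $w_k, \overline{w}_k \geq 0$ and $\overline{w}_1 > 0$, has optimal value equal to $\max_{t \in [m]} \frac{\sum_{k=1}^t w_k}{\sum_{k=1}^t \overline{w}_k}$ (over $t$ with $\sum_{k=1}^t \overline{w}_k > 0$). -/
import Mathlib

/-- The universal finset of `Fin m` is nonempty when `0 < m`. -/
def neFin {m : ℕ} (hm : 0 < m) : (Finset.univ : Finset (Fin m)).Nonempty :=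
  Finset.univ_nonempty_iff.mpr (Fin.pos_iff_nonempty.mp hm)

lemma abel_aux (m : ℕ) (f x : ℕ → ℝ) :
    ∑ k ∈ Finset.range m, f k * x k
      = ∑ t ∈ Finset.range m, (x t - x (t+1)) * (∑ i ∈ Finset.range (t+1), f i)
        + x m * ∑ i ∈ Finset.range m, f i := by
  induction m with
  | zero => simp
  | succ m ih =>
      rw [Finset.sum_range_succ, ih, Finset.sum_range_succ (fun t => (x t - x (t+1)) * _),
        Finset.sum_range_succ f m]
      ring

lemma prefix_conv {m : ℕ} (f : Fin m → ℝ) (t : ℕ) (ht : t < m) :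
    ∑ i ∈ Finset.range (t+1), (fun n => if h : n < m then f ⟨n, h⟩ else 0) i
      = ∑ i ∈ Finset.Iic (⟨t, ht⟩ : Fin m), f i := by
  have h1 : (Finset.Iic (⟨t, ht⟩ : Fin m)) = Finset.univ.filter (fun i : Fin m => (i : ℕ) ≤ t) := by
    ext i; simp [Fin.le_def]
  have h2 : Finset.range (t+1) = (Finset.range m).filter (fun n => n ≤ t) := by
    ext n; simp; omega
  rw [h1, Finset.sum_filter, h2, Finset.sum_filter,
    Finset.sum_range (fun n => if n ≤ t then (fun k => if h : k < m then f ⟨k, h⟩ else 0) n else 0)]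
  apply Finset.sum_congr rfl
  intro i _
  simp [i.isLt]

/-- The LP over nonincreasing nonnegative vectors `x` with normalization
`∑ wb k * x k = 1`, maximizing `∑ w k * x k`, has optimal value equal to the
maximum prefix-sum ratio. -/
theorem lp_prefix_ratio_optimum (m : ℕ) (hm : 0 < m) (w wb : Fin m → ℝ)
    (hw : ∀ k, 0 ≤ w k) (hwb : ∀ k, 0 ≤ wb k) (hwb1 : 0 < wb ⟨0, hm⟩)
    (hpos : ∀ t : Fin m, 0 < ∑ i ∈ Finset.Iic t, wb i) :
    IsGreatest
      {z : ℝ | ∃ x : Fin m → ℝ, Antitone x ∧ (∀ k, 0 ≤ x k) ∧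
        (∑ k, wb k * x k) = 1 ∧ z = ∑ k, w k * x k}
      (Finset.univ.sup' (neFin hm) (fun t : Fin m =>
        (∑ i ∈ Finset.Iic t, w i) / (∑ i ∈ Finset.Iic t, wb i))) := by
  set R : Fin m → ℝ := fun t => (∑ i ∈ Finset.Iic t, w i) / (∑ i ∈ Finset.Iic t, wb i) with hR
  set M : ℝ := Finset.univ.sup' (neFin hm) R with hMdef
  obtain ⟨ts, -, hts⟩ := Finset.exists_mem_eq_sup' (neFin hm) R
  constructor
  · -- membership: indicator of Iic ts scaled
    set c : ℝ := (∑ i ∈ Finset.Iic ts, wb i)⁻¹ with hc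
    have hc0 : 0 ≤ c := le_of_lt (inv_pos.mpr (hpos ts))
    refine ⟨fun k => if k ≤ ts then c else 0, ?_, ?_, ?_, ?_⟩
    · intro a b hab
      dsimp only
      by_cases hb : b ≤ ts
      · rw [if_pos hb, if_pos (hab.trans hb)]
      · rw [if_neg hb]
        split <;> simp [hc0]
    · intro k; dsimp only; split <;> simp [hc0]
    · have : ∀ k : Fin m, wb k * (if k ≤ ts then c else 0)
          = if k ≤ ts then wb k * c else 0 := by intro k; split <;> simp
      simp_rw [this, ← Finset.sum_filter]
      rw [show Finset.univ.filter (fun k => k ≤ ts) = Finset.Iic ts by ext i; simp,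
        ← Finset.sum_mul]
      exact mul_inv_cancel₀ (hpos ts).ne'
    · have : ∀ k : Fin m, w k * (if k ≤ ts then c else 0)
          = if k ≤ ts then w k * c else 0 := by intro k; split <;> simp
      simp_rw [this, ← Finset.sum_filter]
      rw [show Finset.univ.filter (fun k => k ≤ ts) = Finset.Iic ts by ext i; simp,
        ← Finset.sum_mul]
      rw [hMdef, hts]
      simp only [hR, hc, div_eq_mul_inv]
  · -- upper bound
    rintro z ⟨x, hxa, hx0, hnorm, rfl⟩
    have hRle : ∀ tf : Fin m, (∑ i ∈ Finset.Iic tf, w i) ≤ M * (∑ i ∈ Finset.Iic tf, wb i) := by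
      intro tf
      have h := Finset.le_sup' R (Finset.mem_univ tf)
      rw [hR] at h
      calc (∑ i ∈ Finset.Iic tf, w i)
          = ((∑ i ∈ Finset.Iic tf, w i) / (∑ i ∈ Finset.Iic tf, wb i))
              * (∑ i ∈ Finset.Iic tf, wb i) := by
            rw [div_mul_cancel₀ _ (hpos tf).ne']
        _ ≤ M * (∑ i ∈ Finset.Iic tf, wb i) :=
            mul_le_mul_of_nonneg_right h (le_of_lt (hpos tf))
    set F : (Fin m → ℝ) → ℕ → ℝ := fun f n => if h : n < m then f ⟨n, h⟩ else 0 with hF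
    have hFx0 : F x m = 0 := by simp [hF]
    have hkey : ∀ f : Fin m → ℝ, ∑ k, f k * x k
        = ∑ t ∈ Finset.range m, (F x t - F x (t+1)) * (∑ i ∈ Finset.range (t+1), F f i) := by
      intro f
      have h1 : ∑ k, f k * x k = ∑ k ∈ Finset.range m, F f k * F x k := by
        rw [Finset.sum_range (fun n => F f n * F x n)]
        apply Finset.sum_congr rfl
        intro i _
        simp [hF, i.isLt]
      rw [h1, abel_aux, hFx0, zero_mul, add_zero]
    have hd0 : ∀ t ∈ Finset.range m, 0 ≤ F x t - F x (t+1) := by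
      intro t htm
      rw [Finset.mem_range] at htm
      by_cases h1 : t + 1 < m
      · have := hxa (show (⟨t, htm⟩ : Fin m) ≤ ⟨t+1, h1⟩ by simp [Fin.le_def])
        simp only [hF, dif_pos htm, dif_pos h1]
        linarith
      · simp only [hF, dif_pos htm, dif_neg h1]
        simpa using hx0 _
    calc ∑ k, w k * x k
        = ∑ t ∈ Finset.range m, (F x t - F x (t+1)) * (∑ i ∈ Finset.range (t+1), F w i) :=
          hkey w
      _ ≤ ∑ t ∈ Finset.range m, (F x t - F x (t+1)) * (M * (∑ i ∈ Finset.range (t+1), F wb i)) := by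
          apply Finset.sum_le_sum
          intro t htm
          apply mul_le_mul_of_nonneg_left _ (hd0 t htm)
          rw [Finset.mem_range] at htm
          rw [prefix_conv w t htm, prefix_conv wb t htm]
          exact hRle ⟨t, htm⟩
      _ = M * ∑ t ∈ Finset.range m, (F x t - F x (t+1)) * (∑ i ∈ Finset.range (t+1), F wb i) := by
          rw [Finset.mul_sum]; apply Finset.sum_congr rfl; intro t _; ring
      _ = M * ∑ k, wb k * x k := by rw [← hkey wb]
      _ = M := by rw [hnorm, mul_one]
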